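/- Let Γ be a triangle-free graph in which every maximal thick join is a non-square suspension and every induced square is contained in a maximal thick join. Then the diagonal graph ⧄(Γ) has no isolated edges: every edge of ⧄(Γ) has at least one endpoint of degree ≥ 3 (namely, the diagonal that is the pole of a non-square suspension gives a vertex of ⧄(Γ) with at least 3 neighbors). -/

import Mathlib

/-- `{a,b} * {c,d}` is an induced square of `Γ`. -/
def IsInducedSquare {V : Type*} (Γ : SimpleGraph V) (a b c d : V) : Prop :=
  a ≠ b ∧ c ≠ d ∧ ¬ Γ.Adj a b ∧ ¬ Γ.Adj c d ∧
    Γ.Adj a c ∧ Γ.Adj a d ∧ Γ.Adj b c ∧ Γ.Adj b d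

lemma IsInducedSquare.symm {V : Type*} {Γ : SimpleGraph V} {a b c d : V}
    (h : IsInducedSquare Γ a b c d) : IsInducedSquare Γ c d a b := by
  obtain ⟨h1, h2, h3, h4, h5, h6, h7, h8⟩ := h
  exact ⟨h2, h1, h4, h3, h5.symm, h7.symm, h6.symm, h8.symm⟩

/-- The diagonal graph of `Γ`: vertices are (potential) diagonal pairs, with an
edge joining the two diagonal pairs of each induced square of `Γ`. -/
def diagGraph {V : Type*} (Γ : SimpleGraph V) : SimpleGraph (Sym2 V) where
  Adj p q := p ≠ q ∧ ∃ a b c d : V,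
    p = s(a, b) ∧ q = s(c, d) ∧ IsInducedSquare Γ a b c d
  symm := ⟨by
    rintro p q ⟨hne, a, b, c, d, hp, hq, hsq⟩
    exact ⟨hne.symm, c, d, a, b, hq, hp, hsq.symm⟩⟩
  loopless := ⟨fun p h => h.1 rfl⟩

/-- `A` and `B` form a join subgraph of `Γ`. -/
def IsJoinPair {V : Type*} (Γ : SimpleGraph V) (A B : Set V) : Prop :=
  Disjoint A B ∧ ∀ a ∈ A, ∀ b ∈ B, Γ.Adj a b

/-- A thick join: a join `A * B` in which each side contains a nonadjacent pair. -/
def IsThickJoin {V : Type*} (Γ : SimpleGraph V) (A B : Set V) : Prop :=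
  IsJoinPair Γ A B ∧
    (∃ a ∈ A, ∃ a' ∈ A, a ≠ a' ∧ ¬ Γ.Adj a a') ∧
    (∃ b ∈ B, ∃ b' ∈ B, b ≠ b' ∧ ¬ Γ.Adj b b')

/-- A maximal thick join: one not properly contained in another thick join. -/
def IsMaxThickJoin {V : Type*} (Γ : SimpleGraph V) (A B : Set V) : Prop :=
  IsThickJoin Γ A B ∧ ∀ A' B' : Set V, IsThickJoin Γ A' B' →
    ((A ⊆ A' ∧ B ⊆ B') ∨ (A ⊆ B' ∧ B ⊆ A')) → A ∪ B = A' ∪ B'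

-- auxiliary lemmas

lemma noTri {V : Type*} {Γ : SimpleGraph V} (hTF : Γ.CliqueFree 3) {x y z : V}
    (hxy : Γ.Adj x y) (hxz : Γ.Adj x z) : ¬ Γ.Adj y z := by
  intro h
  classical
  exact hTF {x, y, z} (SimpleGraph.is3Clique_triple_iff.mpr ⟨hxy, hxz, h⟩)

lemma IsThickJoin.symm' {V : Type*} {Γ : SimpleGraph V} {A B : Set V}
    (h : IsThickJoin Γ A B) : IsThickJoin Γ B A :=
  ⟨⟨h.1.1.symm, fun b hb a ha => (h.1.2 a ha b hb).symm⟩, h.2.2, h.2.1⟩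

lemma IsMaxThickJoin.symm' {V : Type*} {Γ : SimpleGraph V} {A B : Set V}
    (h : IsMaxThickJoin Γ A B) : IsMaxThickJoin Γ B A := by
  refine ⟨h.1.symm', fun A' B' ht hsub => ?_⟩
  rw [Set.union_comm]
  exact h.2 A' B' ht (by tauto)

lemma pair_eq_of_mem {V : Type*} {a b x y : V} (hab : a ≠ b)
    (ha : a ∈ ({x, y} : Set V)) (hb : b ∈ ({x, y} : Set V)) :
    ({x, y} : Set V) = {a, b} := by
  rcases ha with rfl | rfl <;> rcases hb with rfl | rfl <;>
    first | exact absurd rfl hab | rfl | exact Set.pair_comm _ _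

lemma key {V : Type*} {Γ : SimpleGraph V} (hTF : Γ.CliqueFree 3) {a b : V} {C : Set V}
    (hmax : IsMaxThickJoin Γ {a, b} C) (hab : a ≠ b) (hnab : ¬ Γ.Adj a b)
    (hC3 : 3 ≤ C.ncard) :
    3 ≤ {r : Sym2 V | (diagGraph Γ).Adj s(a, b) r}.ncard := by
  have hCfin : C.Finite := Set.finite_of_ncard_ne_zero (by omega)
  -- the common neighborhood
  set N : Set V := {v | Γ.Adj a v ∧ Γ.Adj b v} with hN
  have hCN : C ⊆ N := fun c hc =>
    ⟨hmax.1.1.2 a (by simp) c hc, hmax.1.1.2 b (by simp) c hc⟩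
  -- two distinct elements of C
  obtain ⟨T, hTC, hT3⟩ := Set.exists_subset_card_eq hC3
  obtain ⟨n0, n1, n2, h01, h02, h12, rfl⟩ := Set.ncard_eq_three.mp hT3
  have hn0 : n0 ∈ C := hTC (by simp)
  have hn1 : n1 ∈ C := hTC (by simp)
  have hn2 : n2 ∈ C := hTC (by simp)
  -- {a,b} * N is a thick join
  have hthick : IsThickJoin Γ {a, b} N := by
    refine ⟨⟨?_, ?_⟩, ⟨a, by simp, b, by simp, hab, hnab⟩,
      ⟨n0, hCN hn0, n1, hCN hn1, h01, noTri hTF (hCN hn0).1 (hCN hn1).1⟩⟩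
    · rw [Set.disjoint_left]
      rintro v (rfl | rfl) hv
      · exact Γ.irrefl hv.1
      · exact Γ.irrefl hv.2
    · rintro x (rfl | rfl) v hv
      · exact hv.1
      · exact hv.2
  -- maximality: N ⊆ C
  have hNC : N ⊆ C := by
    have := hmax.2 {a, b} N hthick (Or.inl ⟨subset_rfl, hCN⟩)
    intro v hv
    have hva : v ≠ a := fun h => Γ.irrefl (h ▸ hv.1)
    have hvb : v ≠ b := fun h => Γ.irrefl (h ▸ hv.2)
    have : v ∈ ({a, b} : Set V) ∪ C := this ▸ (Set.mem_union_right _ hv)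
    rcases this with h | h
    · rcases h with rfl | rfl <;> simp_all
    · exact h
  have hNfin : N.Finite := hCfin.subset hNC
  -- the neighbor set is contained in a finite set
  have hsub : {r : Sym2 V | (diagGraph Γ).Adj s(a, b) r} ⊆
      (fun p : V × V => s(p.1, p.2)) '' (N ×ˢ N) := by
    rintro r ⟨-, a', b', c', d', hp, rfl, hsq⟩
    obtain ⟨h1, h2, h3, h4, h5, h6, h7, h8⟩ := hsq
    have : (a = a' ∧ b = b') ∨ (a = b' ∧ b = a') := Sym2.eq_iff.mp hp
    refine ⟨(c', d'), ?_, rfl⟩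
    rcases this with ⟨rfl, rfl⟩ | ⟨rfl, rfl⟩ <;>
      exact ⟨⟨by assumption, by assumption⟩, ⟨by assumption, by assumption⟩⟩
  have hfin : {r : Sym2 V | (diagGraph Γ).Adj s(a, b) r}.Finite :=
    ((hNfin.prod hNfin).image _).subset hsub
  -- three distinct neighbors
  have hmem : ∀ x y : V, x ∈ C → y ∈ C → x ≠ y →
      s(x, y) ∈ {r : Sym2 V | (diagGraph Γ).Adj s(a, b) r} := by
    intro x y hx hy hxy
    have hax : Γ.Adj a x := (hCN hx).1
    have hbx : Γ.Adj b x := (hCN hx).2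
    have hay : Γ.Adj a y := (hCN hy).1
    have hby : Γ.Adj b y := (hCN hy).2
    refine ⟨?_, a, b, x, y, rfl, rfl, hab, hxy, hnab, noTri hTF hax hay, hax, hay, hbx, hby⟩
    intro h
    rcases Sym2.eq_iff.mp h with ⟨rfl, rfl⟩ | ⟨rfl, rfl⟩
    · exact Γ.irrefl hax
    · exact Γ.irrefl hay
  have hT : ({s(n0, n1), s(n0, n2), s(n1, n2)} : Set (Sym2 V)) ⊆
      {r : Sym2 V | (diagGraph Γ).Adj s(a, b) r} := by
    rintro r (rfl | rfl | rfl)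
    · exact hmem _ _ hn0 hn1 h01
    · exact hmem _ _ hn0 hn2 h02
    · exact hmem _ _ hn1 hn2 h12
  have h3 : ({s(n0, n1), s(n0, n2), s(n1, n2)} : Set (Sym2 V)).ncard = 3 := by
    refine Set.ncard_eq_three.mpr ⟨_, _, _, ?_, ?_, ?_, rfl⟩ <;>
      · intro h
        rcases Sym2.eq_iff.mp h with ⟨h', h''⟩ | ⟨h', h''⟩ <;> simp_all
  calc 3 = _ := h3.symm
    _ ≤ _ := Set.ncard_le_ncard hT hfin

theorem stmt_17 {V : Type*} (Γ : SimpleGraph V) (hTF : Γ.CliqueFree 3)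
    (hmax : ∀ A B : Set V, IsMaxThickJoin Γ A B →
      ∃ a b : V, a ≠ b ∧ ¬ Γ.Adj a b ∧
        ((A = {a, b} ∧ 3 ≤ B.ncard) ∨ (B = {a, b} ∧ 3 ≤ A.ncard)))
    (hsqmax : ∀ a b c d : V, IsInducedSquare Γ a b c d →
      ∃ A B : Set V, IsMaxThickJoin Γ A B ∧
        ((({a, b} : Set V) ⊆ A ∧ ({c, d} : Set V) ⊆ B) ∨
         (({a, b} : Set V) ⊆ B ∧ ({c, d} : Set V) ⊆ A))) :
    ∀ p q : Sym2 V, (diagGraph Γ).Adj p q →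
      3 ≤ {r : Sym2 V | (diagGraph Γ).Adj p r}.ncard ∨
      3 ≤ {r : Sym2 V | (diagGraph Γ).Adj q r}.ncard := by
  rintro p q ⟨-, a, b, c, d, rfl, rfl, hsq⟩
  obtain ⟨hab, hcd, hnab, hncd, h5, h6, h7, h8⟩ := hsq
  obtain ⟨A, B, hABmax, horient⟩ :=
    hsqmax a b c d ⟨hab, hcd, hnab, hncd, h5, h6, h7, h8⟩
  obtain ⟨x, y, hxy, hnxy, hpole⟩ := hmax A B hABmax
  -- normalize: get a max thick join ({x,y}, D) with 3 ≤ D.ncard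
  have hnorm : ∃ D : Set V, IsMaxThickJoin Γ {x, y} D ∧ 3 ≤ D.ncard ∧
      (({a, b} : Set V) ⊆ {x, y} ∨ ({c, d} : Set V) ⊆ {x, y}) := by
    rcases hpole with ⟨rfl, hB⟩ | ⟨rfl, hA⟩
    · rcases horient with ⟨h1, h2⟩ | ⟨h1, h2⟩
      · exact ⟨B, hABmax, hB, Or.inl h1⟩
      · exact ⟨B, hABmax, hB, Or.inr h2⟩
    · rcases horient with ⟨h1, h2⟩ | ⟨h1, h2⟩
      · exact ⟨A, hABmax.symm', hA, Or.inr h2⟩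
      · exact ⟨A, hABmax.symm', hA, Or.inl h1⟩
  obtain ⟨D, hDmax, hD3, hcase⟩ := hnorm
  rcases hcase with hin | hin
  · left
    have heq : ({x, y} : Set V) = {a, b} :=
      pair_eq_of_mem hab (hin (by simp)) (hin (by simp))
    exact key hTF (heq ▸ hDmax) hab hnab hD3
  · right
    have heq : ({x, y} : Set V) = {c, d} :=
      pair_eq_of_mem hcd (hin (by simp)) (hin (by simp))
    exact key hTF (heq ▸ hDmax) hcd hncd hD3
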